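/- Let G be an acyclic directed mixed graph on the finite vertex set V, and let X_v be finite state spaces of size at least 2. If p and q are strictly positive probability distributions on X_V that both satisfy the global Markov property for G, and if for every head H of G with tail T = tail_G(H), every L with H ⊆ L ⊆ H ∪ T and every x_L ∈ X_L the marginal log-linear parameters agree, λ_L^{H∪T}(x_L)[p] = λ_L^{H∪T}(x_L)[q], then p = q. That is, the ingenuous parameters determine the distribution within the model defined by the global Markov property for G. -/

import Mathlib

/-!
Induct over ancestral sets `A`. For a barren vertex `b` of `A`, m-separation gives
`b ⊥ A ∖ mb(b, A) | mb(b, A) ∖ {b}`, so `p_A` is determined by the margins on `mb(b, A)` and on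
proper ancestral subsets of `A`. If every barren vertex of `A` lies in `mb(b, A)`, they form a
head `H` with `H ∪ tail(H) = mb(b, A)`: expanding `log p_M` in MLL parameters shows that the
symmetrised Kullback–Leibler divergence between `p_M` and `q_M` only involves the parameters
`λ_L^M` with `H ⊆ L`, which agree, and margins on sets `L ⊉ H`, whose ancestors form a proper
subset of `A`; so it vanishes. Otherwise `mb(b, A)` itself lies in a proper ancestral subset.
-/

open Finset

open scoped Classical

variable {V : Type} [Fintype V] [DecidableEq V]

/-- Joint state space: variable `v` takes values in `{0, …, d v + 1}`,
so each state space has size `d v + 2 ≥ 2`. -/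
abbrev Config (V : Type) (d : V → ℕ) : Type := ∀ v : V, Fin (d v + 2)

/-- Marginal `p_M` of `p` on the margin `M`, as a function of a full configuration
(it depends only on the coordinates in `M`). -/
noncomputable def margin (d : V → ℕ) (p : Config V d → ℝ) (M : Finset V)
    (x : Config V d) : ℝ :=
  ∑ y : Config V d, if ∀ v ∈ M, y v = x v then p y else 0

/-- Marginal log-linear parameter `λ_L^M(x_L)`:
`|X_M|⁻¹ ∑_{y_M ∈ X_M} log p_M(y_M) ∏_{v ∈ L} (|X_v|·1[x_v = y_v] − 1)`.
The sum over `y_M ∈ X_M` is realized by summing over full configurations `y`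
that are `0` outside `M` (one representative for each `y_M`). -/
noncomputable def mll (d : V → ℕ) (p : Config V d → ℝ) (L M : Finset V)
    (x : Config V d) : ℝ :=
  (∏ v ∈ M, ((d v + 2 : ℕ) : ℝ))⁻¹ *
    ∑ y : Config V d,
      if ∀ v ∉ M, y v = 0 then
        Real.log (margin d p M y) *
          ∏ v ∈ L, (((d v + 2 : ℕ) : ℝ) * (if x v = y v then 1 else 0) - 1)
      else 0

/-- Conditional independence `X_A ⊥ X_B | X_C [p]`:
`p_{A∪B∪C}(x) · p_C(x) = p_{A∪C}(x) · p_{B∪C}(x)` for all configurations. -/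
def CondIndep (d : V → ℕ) (p : Config V d → ℝ) (A B C : Finset V) : Prop :=
  ∀ x : Config V d,
    margin d p (A ∪ B ∪ C) x * margin d p C x
      = margin d p (A ∪ C) x * margin d p (B ∪ C) x

/-- An acyclic directed mixed graph (ADMG): directed edges `dir` and a symmetric
irreflexive set of bidirected edges `bi`, with no directed cycle. -/
structure ADMG (V : Type) [Fintype V] [DecidableEq V] where
  dir : V → V → Prop
  bi : V → V → Prop
  bi_symm : ∀ {v w}, bi v w → bi w v
  bi_irrefl : ∀ v, ¬ bi v v
  acyclic : ∀ v, ¬ Relation.TransGen dir v v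

namespace ADMG

/-- Ancestors of (members of) `A`: vertices `w` with `w = a` or a directed path `w → ⋯ → a`
for some `a ∈ A`. -/
noncomputable def anc (G : ADMG V) (A : Finset V) : Finset V :=
  univ.filter fun w => ∃ a ∈ A, Relation.ReflTransGen G.dir w a

/-- Descendants of (members of) `A`. -/
noncomputable def dec (G : ADMG V) (A : Finset V) : Finset V :=
  univ.filter fun w => ∃ a ∈ A, Relation.ReflTransGen G.dir a w

/-- Parents of (members of) `A`. -/
noncomputable def pa (G : ADMG V) (A : Finset V) : Finset V :=
  univ.filter fun w => ∃ a ∈ A, G.dir w a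

/-- `barren_G(U)`: members of `U` with no non-trivial descendant in `U`. -/
noncomputable def barren (G : ADMG V) (U : Finset V) : Finset V :=
  U.filter fun v => G.dec {v} ∩ U = {v}

/-- `U` is barren if `barren_G(U) = U`. -/
def IsBarren (G : ADMG V) (U : Finset V) : Prop := G.barren U = U

/-- One bidirected step inside the induced subgraph `G_S`. -/
def biStep (G : ADMG V) (S : Finset V) (u w : V) : Prop :=
  u ∈ S ∧ w ∈ S ∧ G.bi u w

/-- District of (members of) `A` in the induced subgraph `G_S`: vertices joined to a member
of `A` by a (possibly empty) bidirected path within `S`. -/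
noncomputable def disIn (G : ADMG V) (S A : Finset V) : Finset V :=
  univ.filter fun w => ∃ a ∈ A, a ∈ S ∧ w ∈ S ∧ Relation.ReflTransGen (G.biStep S) a w

/-- District in the whole graph. -/
noncomputable def dis (G : ADMG V) (A : Finset V) : Finset V := G.disIn univ A

/-- A head: a nonempty barren set connected by bidirected paths in `G_{an_G(H)}`. -/
def IsHead (G : ADMG V) (H : Finset V) : Prop :=
  H.Nonempty ∧ G.IsBarren H ∧
    ∀ a ∈ H, ∀ b ∈ H, Relation.ReflTransGen (G.biStep (G.anc H)) a b

/-- The tail of a head: `tail_G(H) = pa_G(D) ∪ (D ∖ H)` where `D = dis_{G_{an(H)}}(H)`. -/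
noncomputable def tail (G : ADMG V) (H : Finset V) : Finset V :=
  G.pa (G.disIn (G.anc H) H) ∪ (G.disIn (G.anc H) H \ H)

end ADMG

/-- `Gbar` is a head-preserving completion of `G`: a complete supergraph (on the same
vertices) in which every head of `G` is still a head. -/
def IsHPC (G Gbar : ADMG V) : Prop :=
  (∀ v w, G.dir v w → Gbar.dir v w) ∧
  (∀ v w, G.bi v w → Gbar.bi v w) ∧
  (∀ v w : V, v ≠ w → Gbar.dir v w ∨ Gbar.dir w v ∨ Gbar.bi v w) ∧
  (∀ H : Finset V, G.IsHead H → Gbar.IsHead H)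

/-- Type of an edge on a path, read from left to right:
`u → w`, `u ← w`, or `u ↔ w`. -/
inductive EdgeType : Type
  | toRight
  | toLeft
  | biE

/-- The edge of the given type is present in `G` between `u` (left) and `w` (right). -/
def edgeOK (G : ADMG V) : EdgeType → V → V → Prop
  | .toRight, u, w => G.dir u w
  | .toLeft,  u, w => G.dir w u
  | .biE,     u, w => G.bi u w

/-- The edge has an arrowhead at its right endpoint. -/
def arrowAtRight : EdgeType → Prop
  | .toRight => True
  | .toLeft  => False
  | .biE     => True

/-- The edge has an arrowhead at its left endpoint. -/
def arrowAtLeft : EdgeType → Prop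
  | .toRight => False
  | .toLeft  => True
  | .biE     => True

/-- A path from `x` to `y` in the mixed graph `G`: distinct vertices `f 0, …, f n`
joined by edges of the recorded types. -/
structure GPath (G : ADMG V) (x y : V) where
  n : ℕ
  f : Fin (n + 1) → V
  inj : Function.Injective f
  first : f 0 = x
  last : f (Fin.last n) = y
  e : Fin n → EdgeType
  ok : ∀ i : Fin n, edgeOK G (e i) (f i.castSucc) (f i.succ)

/-- The interior vertex `f (i+1)` is a collider on the path: both incident edges
have an arrowhead at it. -/
def GPath.colliderAt {G : ADMG V} {x y : V} (w : GPath G x y)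
    (i : ℕ) (h : i + 1 < w.n) : Prop :=
  arrowAtRight (w.e ⟨i, by omega⟩) ∧ arrowAtLeft (w.e ⟨i + 1, h⟩)

/-- The path is blocked by `C`: some interior non-collider is in `C`, or some interior
collider is outside `an_G(C)`. -/
def GPath.Blocked {G : ADMG V} {x y : V} (w : GPath G x y) (C : Finset V) : Prop :=
  ∃ (i : ℕ) (h : i + 1 < w.n),
    (¬ w.colliderAt i h ∧ w.f ⟨i + 1, by omega⟩ ∈ C) ∨
    (w.colliderAt i h ∧ w.f ⟨i + 1, by omega⟩ ∉ G.anc C)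

/-- m-separation of `A` and `B` given `C` in `G`. -/
def MSep (G : ADMG V) (A B C : Finset V) : Prop :=
  ∀ a ∈ A, ∀ b ∈ B, ∀ w : GPath G a b, w.Blocked C

/-- The global Markov property: m-separation implies conditional independence. -/
def GlobalMarkov (G : ADMG V) (d : V → ℕ) (p : Config V d → ℝ) : Prop :=
  ∀ A B C : Finset V, Disjoint A B → Disjoint A C → Disjoint B C →
    MSep G A B C → CondIndep d p A B C

section Marginals

variable {d : V → ℕ}

lemma card_filter_agree (M : Finset V) (y : Config V d) :
    (univ.filter fun x : Config V d => ∀ v ∈ M, y v = x v).card = ∏ v ∈ Mᶜ, (d v + 2) := by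
  have hpi : (univ.filter fun x : Config V d => ∀ v ∈ M, y v = x v)
      = Fintype.piFinset fun v => if v ∈ M then {y v} else univ := by
    ext x
    simp only [mem_filter, mem_univ, true_and, Fintype.mem_piFinset]
    refine ⟨fun h v => ?_, fun h v hv => ?_⟩
    · split_ifs with hv
      · exact mem_singleton.2 (h v hv).symm
      · exact mem_univ _
    · simpa [hv, eq_comm] using h v
  rw [hpi, Fintype.card_piFinset]
  simp only [apply_ite card, card_singleton, card_univ, Fintype.card_fin]
  rw [prod_ite]
  simp [filter_not, compl_eq_univ_sdiff]

lemma dependsOn_margin (p : Config V d → ℝ) (M : Finset V) :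
    DependsOn (margin d p M) M := fun x x' h => by
  refine sum_congr rfl fun y _ => if_congr ?_ rfl rfl
  exact forall₂_congr fun v hv => by rw [h v hv]

lemma margin_pos {p : Config V d → ℝ} (hp : ∀ x, 0 < p x) (M : Finset V) (x : Config V d) :
    0 < margin d p M x :=
  calc 0 < p x := hp x
    _ = if ∀ v ∈ M, x v = x v then p x else 0 := (if_pos fun _ _ => rfl).symm
    _ ≤ margin d p M x :=
      single_le_sum (f := fun y => if ∀ v ∈ M, y v = x v then p y else 0)
        (fun y _ => by split_ifs; exacts [(hp y).le, le_rfl]) (mem_univ x)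

lemma margin_empty (p : Config V d → ℝ) (x : Config V d) : margin d p ∅ x = ∑ y, p y := by
  simp [margin]

lemma margin_univ (p : Config V d → ℝ) (x : Config V d) : margin d p univ x = p x := by
  simp [margin, ← funext_iff]

/-- Summing a function of `x_M` against the marginal `p_M` over all of `X_V` counts each
`x_M` once for every completion outside `M`. -/
lemma sum_margin_mul (p : Config V d → ℝ) (M : Finset V) {f : Config V d → ℝ}
    (hf : DependsOn f M) :
    ∑ x, margin d p M x * f x = (∏ v ∈ Mᶜ, ((d v + 2 : ℕ) : ℝ)) * ∑ y, p y * f y := by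
  simp only [margin, sum_mul, ite_mul, zero_mul]
  rw [sum_comm, mul_sum]
  refine sum_congr rfl fun y _ => ?_
  calc ∑ x, (if ∀ v ∈ M, y v = x v then p y * f x else 0)
      = ∑ x ∈ univ.filter fun x : Config V d => ∀ v ∈ M, y v = x v, p y * f y := by
        rw [sum_filter]
        exact sum_congr rfl fun x _ => by split_ifs with h; rw [hf h]; rfl
    _ = _ := by rw [sum_const, card_filter_agree, nsmul_eq_mul]; push_cast; ring

lemma sum_mul_eq_of_margin_eq {p q : Config V d → ℝ} {M : Finset V}
    (h : margin d p M = margin d q M) {f : Config V d → ℝ} (hf : DependsOn f M) :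
    ∑ y, p y * f y = ∑ y, q y * f y := by
  have := sum_margin_mul p M hf
  rw [h, sum_margin_mul q M hf] at this
  exact (mul_left_cancel₀ (by positivity) this).symm

lemma margin_eq_of_subset {p q : Config V d → ℝ} {W M : Finset V} (hWM : W ⊆ M)
    (h : margin d p M = margin d q M) : margin d p W = margin d q W := by
  funext x
  have hf : DependsOn (fun y : Config V d => if ∀ v ∈ W, y v = x v then (1 : ℝ) else 0) M :=
    fun y y' hy => if_congr (forall₂_congr fun v hv => by rw [hy v (hWM hv)]) rfl rfl
  simpa [margin] using sum_mul_eq_of_margin_eq h hf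

end Marginals

section MarginalLogLinear

variable {d : V → ℕ}

lemma dependsOn_mll (p : Config V d → ℝ) (L M : Finset V) : DependsOn (mll d p L M) L :=
  fun x x' h => by
    unfold mll
    congr 1
    refine sum_congr rfl fun y _ => if_congr Iff.rfl ?_ rfl
    exact congrArg _ (prod_congr rfl fun v hv => by rw [h v hv])

/-- The MLL parameters of the margin `M` are the Fourier coefficients of `log p_M`; this is the
inversion formula. -/
lemma log_margin_eq_sum_mll (p : Config V d → ℝ) (M : Finset V) (x : Config V d) :
    Real.log (margin d p M x) = ∑ L ∈ M.powerset, mll d p L M x := by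
  set c : ℝ := ∏ v ∈ M, ((d v + 2 : ℕ) : ℝ)
  set x₀ : Config V d := fun v => if v ∈ M then x v else 0
  have hsum : ∀ y : Config V d, ∑ L ∈ M.powerset,
      ∏ v ∈ L, (((d v + 2 : ℕ) : ℝ) * (if x v = y v then 1 else 0) - 1)
        = c * if ∀ v ∈ M, x v = y v then 1 else 0 := fun y => by
    rw [← prod_add_one]
    simp only [sub_add_cancel, prod_mul_distrib, prod_boole, c]
    congr
  have hrep : ∀ y : Config V d, ((∀ v ∉ M, y v = 0) ∧ ∀ v ∈ M, x v = y v) ↔ y = x₀ := by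
    intro y
    constructor
    · rintro ⟨hout, hin⟩
      funext v
      by_cases hv : v ∈ M
      · simp [x₀, hv, hin v hv]
      · simp [x₀, hv, hout v hv]
    · rintro rfl
      exact ⟨fun v hv => by simp [x₀, hv], fun v hv => by simp [x₀, hv]⟩
  have hx₀ : margin d p M x₀ = margin d p M x :=
    dependsOn_margin p M fun v hv => by simp [x₀, show v ∈ M from hv]
  unfold mll
  calc Real.log (margin d p M x)
      = c⁻¹ * ∑ y, if y = x₀ then c * Real.log (margin d p M y) else 0 := by
        rw [sum_ite_eq', if_pos (mem_univ _), hx₀]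
        field_simp [(by positivity : (0 : ℝ) < c).ne']
    _ = c⁻¹ * ∑ y, if ∀ v ∉ M, y v = 0 then Real.log (margin d p M y) * ∑ L ∈ M.powerset,
          ∏ v ∈ L, (((d v + 2 : ℕ) : ℝ) * (if x v = y v then 1 else 0) - 1) else 0 := by
        refine congrArg _ (sum_congr rfl fun y _ => ?_)
        rw [hsum y]
        by_cases hy : y = x₀
        · obtain ⟨hout, hin⟩ := (hrep y).2 hy
          rw [if_pos hy, if_pos hout, if_pos hin]
          ring
        · rw [if_neg hy]
          by_cases hout : ∀ v ∉ M, y v = 0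
          · rw [if_pos hout, if_neg fun hin => hy ((hrep y).1 ⟨hout, hin⟩), mul_zero, mul_zero]
          · rw [if_neg hout]
    _ = _ := by
        rw [← mul_sum, sum_comm]
        refine congrArg _ (sum_congr rfl fun y _ => ?_)
        rw [sum_ite_irrel, sum_const_zero, mul_sum]

end MarginalLogLinear

lemma sub_mul_log_sub_log_pos {a b : ℝ} (ha : 0 < a) (hb : 0 < b) (hab : a ≠ b) :
    0 < (a - b) * (Real.log a - Real.log b) := by
  rcases hab.lt_or_gt with h | h
  · exact mul_pos_of_neg_of_neg (by linarith) (by linarith [Real.log_lt_log ha h])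
  · exact mul_pos (by linarith) (by linarith [Real.log_lt_log hb h])

section Identification

variable {d : V → ℕ} {p q : Config V d → ℝ}

lemma sum_sub_mul_eq_zero_of_margin_eq {M : Finset V} (h : margin d p M = margin d q M)
    {f : Config V d → ℝ} (hf : DependsOn f M) : ∑ y, (p y - q y) * f y = 0 := by
  simp only [sub_mul, sum_sub_distrib, sum_mul_eq_of_margin_eq h hf, sub_self]

/-- The summands `(p_M - q_M)(log p_M - log q_M)` of the symmetrised Kullback–Leibler divergence
are nonnegative, so the divergence vanishes only if `p_M = q_M`. -/
lemma margin_eq_of_sum_sub_mul_log_margin_eq_zero (hp : ∀ x, 0 < p x) (hq : ∀ x, 0 < q x)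
    {M : Finset V}
    (h : ∑ y, (p y - q y) * (Real.log (margin d p M y) - Real.log (margin d q M y)) = 0) :
    margin d p M = margin d q M := by
  set F := fun y => Real.log (margin d p M y) - Real.log (margin d q M y)
  have hF : DependsOn F M := fun y y' hy => by
    simp only [F, dependsOn_margin p M hy, dependsOn_margin q M hy]
  have hdiv : ∑ x, (margin d p M x - margin d q M x) * F x = 0 := by
    simp only [sub_mul, sum_sub_distrib, sum_margin_mul _ M hF, ← mul_sub]
    rw [← sum_sub_distrib]
    simp only [← sub_mul, F, h, mul_zero]
  have hterm (x : Config V d) : 0 ≤ (margin d p M x - margin d q M x) * F x := by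
    rcases eq_or_ne (margin d p M x) (margin d q M x) with hx | hx
    · rw [hx, sub_self, zero_mul]
    · exact (sub_mul_log_sub_log_pos (margin_pos hp M x) (margin_pos hq M x) hx).le
  funext x
  by_contra hx
  have hzero := (sum_eq_zero_iff_of_nonneg fun x _ => hterm x).1 hdiv x (mem_univ x)
  exact (sub_mul_log_sub_log_pos (margin_pos hp M x) (margin_pos hq M x) hx).ne' hzero

lemma margin_eq_of_mll_eq (hp : ∀ x, 0 < p x) (hq : ∀ x, 0 < q x) {H M : Finset V}
    (hmll : ∀ L, H ⊆ L → L ⊆ M → mll d p L M = mll d q L M)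
    (hmargin : ∀ L ⊆ M, ¬ H ⊆ L → margin d p L = margin d q L) :
    margin d p M = margin d q M := by
  refine margin_eq_of_sum_sub_mul_log_margin_eq_zero hp hq ?_
  simp only [log_margin_eq_sum_mll, ← sum_sub_distrib, mul_sum]
  rw [sum_comm]
  refine sum_eq_zero fun L hL => ?_
  rw [mem_powerset] at hL
  by_cases hHL : H ⊆ L
  · simp [hmll L hHL hL]
  · refine sum_sub_mul_eq_zero_of_margin_eq (hmargin L hL hHL) fun y y' hy => ?_
    simp only [dependsOn_mll p L M hy, dependsOn_mll q L M hy]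

lemma margin_union_eq_of_condIndep (hp : ∀ x, 0 < p x) {A B C : Finset V}
    (hCIp : CondIndep d p A B C) (hCIq : CondIndep d q A B C)
    (hAC : margin d p (A ∪ C) = margin d q (A ∪ C))
    (hBC : margin d p (B ∪ C) = margin d q (B ∪ C)) (hC : margin d p C = margin d q C) :
    margin d p (A ∪ B ∪ C) = margin d q (A ∪ B ∪ C) := by
  funext x
  refine mul_right_cancel₀ (margin_pos hp C x).ne' ?_
  rw [hCIp x, hAC, hBC, ← hCIq x, hC]

end Identification

namespace ADMG

variable (G : ADMG V)

lemma mem_anc {A : Finset V} {w : V} :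
    w ∈ G.anc A ↔ ∃ a ∈ A, Relation.ReflTransGen G.dir w a := by
  simp [anc]

lemma mem_pa {A : Finset V} {w : V} : w ∈ G.pa A ↔ ∃ a ∈ A, G.dir w a := by
  simp [pa]

lemma mem_disIn {S A : Finset V} {w : V} :
    w ∈ G.disIn S A ↔ ∃ a ∈ A, a ∈ S ∧ w ∈ S ∧ Relation.ReflTransGen (G.biStep S) a w := by
  simp [disIn]

lemma mem_barren {A : Finset V} {v : V} :
    v ∈ G.barren A ↔ v ∈ A ∧ ∀ w ∈ A, Relation.ReflTransGen G.dir v w → w = v := by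
  simp only [barren, dec, mem_filter, Finset.ext_iff, mem_inter, mem_singleton, mem_univ, true_and,
    exists_eq_left]
  refine and_congr_right fun hv =>
    ⟨fun h w hw hvw => (h w).1 ⟨hvw, hw⟩, fun h w => ⟨fun ⟨hvw, hw⟩ => h w hw hvw, ?_⟩⟩
  rintro rfl
  exact ⟨.refl, hv⟩

lemma subset_anc (A : Finset V) : A ⊆ G.anc A :=
  fun a ha => G.mem_anc.2 ⟨a, ha, .refl⟩

lemma anc_anc (A : Finset V) : G.anc (G.anc A) = G.anc A := by
  refine Finset.Subset.antisymm (fun w hw => ?_) (G.subset_anc _)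
  obtain ⟨a, ha, hwa⟩ := G.mem_anc.1 hw
  obtain ⟨a', ha', haa'⟩ := G.mem_anc.1 ha
  exact G.mem_anc.2 ⟨a', ha', hwa.trans haa'⟩

lemma anc_subset_of_subset {A B : Finset V} (hB : G.anc B ⊆ B) (hAB : A ⊆ B) : G.anc A ⊆ B :=
  fun w hw => by
    obtain ⟨a, ha, hwa⟩ := G.mem_anc.1 hw
    exact hB (G.mem_anc.2 ⟨a, hAB ha, hwa⟩)

lemma barren_subset (A : Finset V) : G.barren A ⊆ A := filter_subset _ _

/-- Take a descendant of `a` in `A` with the fewest descendants in `A`. -/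
lemma exists_mem_barren {A : Finset V} {a : V} (ha : a ∈ A) :
    ∃ b ∈ G.barren A, Relation.ReflTransGen G.dir a b := by
  let desc (v : V) := A.filter (Relation.ReflTransGen G.dir v)
  have hself {v : V} (hv : v ∈ A) : v ∈ desc v := mem_filter.2 ⟨hv, .refl⟩
  obtain ⟨b, hb, hmin⟩ := exists_min_image (desc a) (fun v => (desc v).card) ⟨a, hself ha⟩
  obtain ⟨hbA, hab⟩ := mem_filter.1 hb
  refine ⟨b, G.mem_barren.2 ⟨hbA, fun w hw hbw => ?_⟩, hab⟩
  by_contra hne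
  have hsub : desc w ⊂ desc b := by
    refine (ssubset_iff_of_subset fun u hu => ?_).2 ⟨b, hself hbA, fun hb' => ?_⟩
    · exact mem_filter.2 ⟨(mem_filter.1 hu).1, hbw.trans (mem_filter.1 hu).2⟩
    · have hbw' := (Relation.reflTransGen_iff_eq_or_transGen.1 hbw).resolve_left hne
      exact G.acyclic b (hbw'.trans_left (mem_filter.1 hb').2)
  exact (card_lt_card hsub).not_ge (hmin w (mem_filter.2 ⟨hw, hab.trans hbw⟩))

instance (S : Finset V) : Std.Symm (G.biStep S) := ⟨fun _ _ h => ⟨h.2.1, h.1, G.bi_symm h.2.2⟩⟩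

lemma anc_barren {A : Finset V} (hA : G.anc A ⊆ A) : G.anc (G.barren A) = A := by
  refine Finset.Subset.antisymm (G.anc_subset_of_subset hA (G.barren_subset A)) fun a ha => ?_
  obtain ⟨b, hb, hab⟩ := G.exists_mem_barren ha
  exact G.mem_anc.2 ⟨b, hb, hab⟩

lemma isBarren_barren (A : Finset V) : G.IsBarren (G.barren A) := by
  ext v
  rw [G.mem_barren]
  exact ⟨fun h => h.1, fun h => ⟨h, fun w hw => (G.mem_barren.1 h).2 w (G.barren_subset A hw)⟩⟩

lemma anc_ssubset_of_notMem {A L : Finset V} (hA : G.anc A ⊆ A) {h : V} (hh : h ∈ G.barren A)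
    (hLA : L ⊆ A) (hhL : h ∉ L) : G.anc L ⊂ A := by
  refine (ssubset_iff_of_subset (G.anc_subset_of_subset hA hLA)).2
    ⟨h, G.barren_subset A hh, fun hhL' => hhL ?_⟩
  obtain ⟨l, hl, hhl⟩ := G.mem_anc.1 hhL'
  rwa [← (G.mem_barren.1 hh).2 l (hLA hl) hhl]

lemma disIn_subset (S A : Finset V) : G.disIn S A ⊆ S := fun _ hw => by
  obtain ⟨_, _, _, hwS, _⟩ := G.mem_disIn.1 hw
  exact hwS

lemma mem_disIn_self {S A : Finset V} {b : V} (hbS : b ∈ S) (hbA : b ∈ A) : b ∈ G.disIn S A :=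
  G.mem_disIn.2 ⟨b, hbA, hbS, hbS, .refl⟩

lemma mem_disIn_singleton {S : Finset V} {b w : V} :
    w ∈ G.disIn S {b} ↔ b ∈ S ∧ w ∈ S ∧ Relation.ReflTransGen (G.biStep S) b w := by
  simp [mem_disIn]

lemma disIn_eq_of_subset {S H : Finset V} {b : V} (hbH : b ∈ H) (hH : H ⊆ G.disIn S {b}) :
    G.disIn S H = G.disIn S {b} := by
  ext u
  rw [mem_disIn, mem_disIn_singleton]
  constructor
  · rintro ⟨h, hhH, hhS, huS, hhu⟩
    obtain ⟨hbS, -, hbh⟩ := G.mem_disIn_singleton.1 (hH hhH)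
    exact ⟨hbS, huS, hbh.trans hhu⟩
  · exact fun hbu => ⟨b, hbH, hbu⟩

/-- The Markov blanket `mb(b, A) = D ∪ pa_G(D)` of `b` in `A`, where `D = dis_{G_A}(b)`. -/
noncomputable def mb (A : Finset V) (b : V) : Finset V := G.disIn A {b} ∪ G.pa (G.disIn A {b})

lemma mb_subset {A : Finset V} (hA : G.anc A ⊆ A) (b : V) : G.mb A b ⊆ A :=
  union_subset (G.disIn_subset A _) fun u hu => by
    obtain ⟨a, ha, hua⟩ := G.mem_pa.1 hu
    exact hA (G.mem_anc.2 ⟨a, G.disIn_subset A _ ha, .single hua⟩)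

lemma mem_mb_self {A : Finset V} {b : V} (hb : b ∈ A) : b ∈ G.mb A b :=
  mem_union_left _ (G.mem_disIn_self hb (mem_singleton_self b))

/-- A barren vertex has no child in `A`, so it cannot lie in the parent part of a blanket. -/
lemma barren_subset_disIn {A : Finset V} {b : V} (h : G.barren A ⊆ G.mb A b) :
    G.barren A ⊆ G.disIn A {b} := by
  intro v hv
  refine (mem_union.1 (h hv)).resolve_right fun hpa => ?_
  obtain ⟨a, haD, hva⟩ := G.mem_pa.1 hpa
  obtain rfl := (G.mem_barren.1 hv).2 a (G.disIn_subset A _ haD) (.single hva)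
  exact G.acyclic a (.single hva)

lemma isHead_barren {A : Finset V} (hA : G.anc A ⊆ A) {b : V} (hb : b ∈ G.barren A)
    (h : G.barren A ⊆ G.mb A b) : G.IsHead (G.barren A) := by
  refine ⟨⟨b, hb⟩, G.isBarren_barren A, fun u hu u' hu' => ?_⟩
  rw [G.anc_barren hA]
  have hD := G.barren_subset_disIn h
  exact (Std.Symm.symm _ _ (G.mem_disIn_singleton.1 (hD hu)).2.2).trans
    (G.mem_disIn_singleton.1 (hD hu')).2.2

lemma barren_union_tail {A : Finset V} (hA : G.anc A ⊆ A) {b : V} (hb : b ∈ G.barren A)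
    (h : G.barren A ⊆ G.mb A b) : G.barren A ∪ G.tail (G.barren A) = G.mb A b := by
  have hD := G.barren_subset_disIn h
  rw [tail, G.anc_barren hA, G.disIn_eq_of_subset hb hD, mb]
  ext v
  have := @hD v
  simp only [mem_union, mem_sdiff]
  tauto

end ADMG

namespace GPath

variable {G : ADMG V} {x y : V} (w : GPath G x y)

/-- The `k`-th vertex of the path, extended by `y` beyond its end. -/
def vtx (k : ℕ) : V := if h : k ≤ w.n then w.f ⟨k, Nat.lt_succ_of_le h⟩ else y

/-- The type of the `k`-th edge of the path, extended by `toRight` beyond its end. -/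
def edge (k : ℕ) : EdgeType := if h : k < w.n then w.e ⟨k, h⟩ else .toRight

lemma vtx_zero : w.vtx 0 = x := by
  simpa [vtx] using w.first

lemma vtx_n : w.vtx w.n = y := by
  simpa [vtx, Fin.last] using w.last

lemma vtx_ne_start {k : ℕ} (hk : 0 < k) (hkn : k ≤ w.n) : w.vtx k ≠ x := by
  intro h
  rw [vtx, dif_pos hkn] at h
  exact hk.ne' (congrArg Fin.val (w.inj (h.trans w.first.symm)))

lemma edgeOK_edge {k : ℕ} (hk : k < w.n) : edgeOK G (w.edge k) (w.vtx k) (w.vtx (k + 1)) := by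
  simpa [edge, vtx, hk, hk.le, Nat.succ_le_of_lt hk] using w.ok ⟨k, hk⟩

lemma colliderAt_iff {i : ℕ} (h : i + 1 < w.n) :
    w.colliderAt i h ↔ arrowAtRight (w.edge i) ∧ arrowAtLeft (w.edge (i + 1)) := by
  simp [colliderAt, edge, h, show i < w.n by omega]

lemma blocked_of_not_collider {C : Finset V} {i : ℕ} (h : i + 1 < w.n)
    (hcol : ¬ (arrowAtRight (w.edge i) ∧ arrowAtLeft (w.edge (i + 1))))
    (hC : w.vtx (i + 1) ∈ C) : w.Blocked C := by
  refine ⟨i, h, .inl ⟨(w.colliderAt_iff h).not.2 hcol, ?_⟩⟩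
  simpa [vtx, h.le] using hC

lemma blocked_of_collider {C : Finset V} {i : ℕ} (h : i + 1 < w.n)
    (hcol : arrowAtRight (w.edge i) ∧ arrowAtLeft (w.edge (i + 1)))
    (hC : w.vtx (i + 1) ∉ G.anc C) : w.Blocked C := by
  refine ⟨i, h, .inr ⟨(w.colliderAt_iff h).2 hcol, ?_⟩⟩
  simpa [vtx, h.le] using hC

end GPath

namespace ADMG

variable (G : ADMG V) {A : Finset V} {b : V}

/-- The ways in which a path from `b` that is unblocked given `mb(b, A) ∖ {b}` can enter a vertex
`u` along an edge of type `e`: into the district `D = dis_{G_A}(b)`, into `pa_G(D)` leaving `u`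
through a tail, or into the complement of `A` through an arrowhead at `u`. -/
def PathEntry (A : Finset V) (b : V) (e : EdgeType) (u : V) : Prop :=
  u ∈ G.disIn A {b} ∨ (u ∈ G.pa (G.disIn A {b}) ∧ e = .toLeft) ∨ (u ∉ A ∧ arrowAtRight e)

lemma pathEntry_of_mem_disIn {e : EdgeType} {v u : V} (hv : v ∈ G.disIn A {b})
    (hvu : edgeOK G e v u) (he : arrowAtLeft e) : G.PathEntry A b e u := by
  cases e with
  | toRight => exact he.elim
  | toLeft => exact .inr (.inl ⟨G.mem_pa.2 ⟨v, hv, hvu⟩, rfl⟩)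
  | biE =>
    by_cases hu : u ∈ A
    · obtain ⟨hbA, hvA, hbv⟩ := G.mem_disIn_singleton.1 hv
      exact .inl (G.mem_disIn_singleton.2 ⟨hbA, hu, hbv.tail ⟨hvA, hu, hvu⟩⟩)
    · exact .inr (.inr ⟨hu, trivial⟩)

lemma pathEntry_of_notMem (hA : G.anc A ⊆ A) {e : EdgeType} {v u : V} (hv : v ∉ A)
    (hvu : edgeOK G e v u) (he : ¬ arrowAtLeft e) : G.PathEntry A b e u := by
  cases e with
  | toRight => exact .inr (.inr ⟨fun hu => hv (hA (G.mem_anc.2 ⟨u, hu, .single hvu⟩)), trivial⟩)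
  | toLeft | biE => exact (he trivial).elim

lemma pathEntry_of_not_blocked (hA : G.anc A ⊆ A) (hb : b ∈ G.barren A) {y : V}
    (w : GPath G b y) (hw : ¬ w.Blocked (G.mb A b \ {b})) :
    ∀ i < w.n, G.PathEntry A b (w.edge i) (w.vtx (i + 1)) := by
  have hbD : b ∈ G.disIn A {b} := G.mem_disIn_self (G.barren_subset A hb) (mem_singleton_self b)
  have hmem {i : ℕ} (hi : i + 1 ≤ w.n) (h : w.vtx (i + 1) ∈ G.mb A b) :
      w.vtx (i + 1) ∈ G.mb A b \ {b} :=
    mem_sdiff.2 ⟨h, by simpa using w.vtx_ne_start i.succ_pos hi⟩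
  intro i
  induction i with
  | zero =>
    intro hn
    have hbu := w.edgeOK_edge hn
    rw [w.vtx_zero] at hbu
    by_cases he : arrowAtLeft (w.edge 0)
    · exact G.pathEntry_of_mem_disIn hbD hbu he
    · obtain hE : w.edge 0 = .toRight := by cases h : w.edge 0 <;> simp_all [arrowAtLeft]
      rw [hE] at hbu ⊢
      exact .inr (.inr ⟨fun hu => w.vtx_ne_start one_pos hn
        ((G.mem_barren.1 hb).2 _ hu (.single hbu)), trivial⟩)
  | succ i ih =>
    intro hn
    rcases ih (by omega) with hD | ⟨hpa, he⟩ | ⟨hvA, he⟩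
    · by_cases hcol : arrowAtRight (w.edge i) ∧ arrowAtLeft (w.edge (i + 1))
      · exact G.pathEntry_of_mem_disIn hD (w.edgeOK_edge hn) hcol.2
      · exact (hw (w.blocked_of_not_collider hn hcol (hmem hn.le (mem_union_left _ hD)))).elim
    · refine (hw (w.blocked_of_not_collider hn ?_ (hmem hn.le (mem_union_right _ hpa)))).elim
      simp [he, arrowAtRight]
    · by_cases hleft : arrowAtLeft (w.edge (i + 1))
      · refine (hw (w.blocked_of_collider hn ⟨he, hleft⟩ fun hanc => hvA ?_)).elim
        exact G.anc_subset_of_subset hA (sdiff_subset.trans (G.mb_subset hA b)) hanc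
      · exact G.pathEntry_of_notMem hA hvA (w.edgeOK_edge hn) hleft

/-- The ordered local Markov property: in an ancestral set, a barren vertex is m-separated from
the rest of the set by its Markov blanket. -/
lemma msep_mb (hA : G.anc A ⊆ A) (hb : b ∈ G.barren A) :
    MSep G {b} (A \ G.mb A b) (G.mb A b \ {b}) := by
  intro a ha y hy w
  obtain rfl := mem_singleton.1 ha
  obtain ⟨hyA, hyM⟩ := mem_sdiff.1 hy
  by_contra hw
  rcases Nat.eq_zero_or_pos w.n with hn | hn
  · refine hyM ?_
    rw [← w.vtx_n, hn, w.vtx_zero]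
    exact G.mem_mb_self (G.barren_subset A hb)
  · have hentry := G.pathEntry_of_not_blocked hA hb w hw (w.n - 1) (by omega)
    rw [Nat.sub_add_cancel hn, w.vtx_n] at hentry
    rcases hentry with hD | ⟨hpa, -⟩ | ⟨hyA', -⟩
    · exact hyM (mem_union_left _ hD)
    · exact hyM (mem_union_right _ hpa)
    · exact hyA' hyA

end ADMG

section Ancestral

variable {d : V → ℕ} {p q : Config V d → ℝ} (G : ADMG V) {A : Finset V}

/-- If the barren vertices of `A` all lie in the blanket of `b`, they form a head whose
ingenuous parameters determine `p_{mb(b, A)}`; otherwise the blanket misses a barren vertex of `A`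
and is covered by induction. -/
lemma margin_mb_eq (hp : ∀ x, 0 < p x) (hq : ∀ x, 0 < q x)
    (hagree : ∀ H : Finset V, G.IsHead H → ∀ L : Finset V, H ⊆ L → L ⊆ H ∪ G.tail H →
      ∀ x : Config V d, mll d p L (H ∪ G.tail H) x = mll d q L (H ∪ G.tail H) x)
    (hA : G.anc A ⊆ A) (ih : ∀ W, G.anc W ⊂ A → margin d p W = margin d q W)
    {b : V} (hb : b ∈ G.barren A) :
    margin d p (G.mb A b) = margin d q (G.mb A b) := by
  by_cases hsub : G.barren A ⊆ G.mb A b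
  · have hunion := G.barren_union_tail hA hb hsub
    refine margin_eq_of_mll_eq hp hq (H := G.barren A) (fun L hHL hLM => funext fun x => ?_)
      fun L hLM hHL => ?_
    · have := hagree _ (G.isHead_barren hA hb hsub) L hHL (hunion ▸ hLM) x
      rwa [hunion] at this
    · obtain ⟨h, hh, hhL⟩ := not_subset.1 hHL
      exact ih L (G.anc_ssubset_of_notMem hA hh (hLM.trans (G.mb_subset hA b)) hhL)
  · obtain ⟨h, hh, hhM⟩ := not_subset.1 hsub
    exact ih _ (G.anc_ssubset_of_notMem hA hh (G.mb_subset hA b) hhM)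

/-- Factorise `p_A` through `b ⊥ A ∖ mb(b, A) | mb(b, A) ∖ {b}`; all factors live on proper
ancestral subsets of `A` or on the blanket. -/
lemma margin_eq_of_ancestral (hp : ∀ x, 0 < p x) (hq : ∀ x, 0 < q x)
    (hpsum : ∑ x, p x = 1) (hqsum : ∑ x, q x = 1)
    (hpGM : GlobalMarkov G d p) (hqGM : GlobalMarkov G d q)
    (hagree : ∀ H : Finset V, G.IsHead H → ∀ L : Finset V, H ⊆ L → L ⊆ H ∪ G.tail H →
      ∀ x : Config V d, mll d p L (H ∪ G.tail H) x = mll d q L (H ∪ G.tail H) x)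
    (hA : G.anc A ⊆ A) (ih : ∀ W, G.anc W ⊂ A → margin d p W = margin d q W) :
    margin d p A = margin d q A := by
  rcases A.eq_empty_or_nonempty with rfl | ⟨a, ha⟩
  · funext x
    rw [margin_empty, margin_empty, hpsum, hqsum]
  obtain ⟨b, hb, -⟩ := G.exists_mem_barren ha
  set M := G.mb A b
  have hbA := G.barren_subset A hb
  have hbM : b ∈ M := G.mem_mb_self hbA
  have hsep := G.msep_mb hA hb
  have hdisj₁ : Disjoint {b} (A \ M) := disjoint_singleton_left.2 fun h => (mem_sdiff.1 h).2 hbM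
  have hdisj₂ : Disjoint {b} (M \ {b}) := by simp
  have hdisj₃ : Disjoint (A \ M) (M \ {b}) := disjoint_of_subset_right sdiff_subset sdiff_disjoint
  have hM : {b} ∪ (M \ {b}) = M := union_sdiff_of_subset (singleton_subset_iff.2 hbM)
  have hAb : (A \ M) ∪ (M \ {b}) = A \ {b} := by
    ext v
    have : v ∈ M → v ∈ A := fun h => G.mb_subset hA b h
    have : v = b → v ∈ M := fun h => h ▸ hbM
    simp only [mem_union, mem_sdiff, mem_singleton]
    tauto
  have hsplit : {b} ∪ (A \ M) ∪ (M \ {b}) = A := by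
    rw [union_assoc, hAb, union_sdiff_of_subset (singleton_subset_iff.2 hbA)]
  rw [← hsplit]
  refine margin_union_eq_of_condIndep hp (hpGM _ _ _ hdisj₁ hdisj₂ hdisj₃ hsep)
    (hqGM _ _ _ hdisj₁ hdisj₂ hdisj₃ hsep) ?_ ?_ ?_
  · rw [hM]
    exact margin_mb_eq G hp hq hagree hA ih hb
  · rw [hAb]
    exact ih _ (G.anc_ssubset_of_notMem hA hb sdiff_subset (by simp))
  · exact ih _ (G.anc_ssubset_of_notMem hA hb (sdiff_subset.trans (G.mb_subset hA b)) (by simp))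

end Ancestral

/-- within the model defined by the global Markov property for `G`, the
ingenuous parameters (the MLL parameters `λ_L^{H∪T}` for heads `H` with tail `T` and
effects `H ⊆ L ⊆ H ∪ T`) determine the distribution. -/
theorem ingenuous_determines (G : ADMG V) (d : V → ℕ)
    (p q : Config V d → ℝ)
    (hppos : ∀ x, 0 < p x) (hpsum : ∑ x, p x = 1) (hpGM : GlobalMarkov G d p)
    (hqpos : ∀ x, 0 < q x) (hqsum : ∑ x, q x = 1) (hqGM : GlobalMarkov G d q)
    (hagree : ∀ H : Finset V, G.IsHead H →
      ∀ L : Finset V, H ⊆ L → L ⊆ H ∪ G.tail H →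
        ∀ x : Config V d,
          mll d p L (H ∪ G.tail H) x = mll d q L (H ∪ G.tail H) x) :
    p = q := by
  have hancestral : ∀ A, G.anc A ⊆ A → margin d p A = margin d q A := by
    intro A
    induction A using Finset.strongInduction with
    | H A ih =>
      intro hA
      refine margin_eq_of_ancestral G hppos hqpos hpsum hqsum hpGM hqGM hagree hA fun W hW => ?_
      exact margin_eq_of_subset (G.subset_anc W) (ih _ hW (G.anc_anc W).le)
  funext x
  simpa only [margin_univ] using congrFun (hancestral univ (subset_univ _)) x
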